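/- The equation m·sin(2√E) + √E·cos(2√E) = 0 has exactly one root E lying in the interval [π²/16, π²/4) for every m ≥ 0; this root is denoted E₁(m). -/

import Mathlib

/-!
Writing `s = √E`, the roots are the zeros in `[π/4, π/2)` of
`g(s) = m sin 2s + s cos 2s`. On `(π/4, π/2)` both `cos 2s < 0` and `sin 2s > 0`, so
`g' = (2m + 1) cos 2s - 2s sin 2s < 0`; since `g(π/4) = m ≥ 0 > -π/2 = g(π/2)`, the
intermediate value theorem gives exactly one zero.
-/

open Real Set

theorem existsUnique_mem_Ico_eq_zero_of_strictAntiOn {f : ℝ → ℝ} {a b : ℝ} (hab : a ≤ b)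
    (hf : ContinuousOn f (Icc a b)) (hanti : StrictAntiOn f (Icc a b))
    (ha : 0 ≤ f a) (hb : f b < 0) :
    ∃! x, x ∈ Ico a b ∧ f x = 0 := by
  obtain ⟨x, hx, hfx⟩ := intermediate_value_Icc' hab hf ⟨hb.le, ha⟩
  have hxb : x ≠ b := by rintro rfl; exact hb.ne hfx
  refine ⟨x, ⟨⟨hx.1, lt_of_le_of_ne hx.2 hxb⟩, hfx⟩, fun y ⟨hy, hfy⟩ => ?_⟩
  exact hanti.injOn (Ico_subset_Icc_self hy) hx (hfy.trans hfx.symm)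

theorem sqrt_mem_Ico_iff {a b E : ℝ} (ha : 0 < a) (hb : 0 < b) :
    √E ∈ Ico a b ↔ E ∈ Ico (a ^ 2) (b ^ 2) :=
  and_congr (le_sqrt' ha) (sqrt_lt' hb)

noncomputable def characteristicFn (m s : ℝ) : ℝ := m * sin (2 * s) + s * cos (2 * s)

theorem hasDerivAt_characteristicFn (m s : ℝ) :
    HasDerivAt (characteristicFn m) ((2 * m + 1) * cos (2 * s) - 2 * s * sin (2 * s)) s := by
  have h2s : HasDerivAt (fun s : ℝ => 2 * s) 2 s := by
    simpa using (hasDerivAt_id s).const_mul 2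
  have hsin := (hasDerivAt_sin (2 * s)).comp s h2s
  have hcos := (hasDerivAt_cos (2 * s)).comp s h2s
  exact ((hsin.const_mul m).add ((hasDerivAt_id s).mul hcos)).congr_deriv
    (by simp only [Function.comp_apply, one_mul, id_eq, neg_mul, mul_neg]; ring)

theorem continuous_characteristicFn (m : ℝ) : Continuous (characteristicFn m) := by
  unfold characteristicFn; fun_prop

theorem characteristicFn_strictAntiOn {m : ℝ} (hm : -(1 / 2) < m) :
    StrictAntiOn (characteristicFn m) (Icc (π / 4) (π / 2)) := by
  refine strictAntiOn_of_deriv_neg (convex_Icc _ _)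
    (continuous_characteristicFn m).continuousOn fun s hs => ?_
  rw [interior_Icc] at hs
  rw [(hasDerivAt_characteristicFn m s).deriv]
  have hcos : cos (2 * s) < 0 :=
    cos_neg_of_pi_div_two_lt_of_lt (by linarith [hs.1]) (by linarith [hs.2, pi_pos])
  have hsin : 0 < sin (2 * s) := sin_pos_of_pos_of_lt_pi (by linarith [hs.1, pi_pos])
    (by linarith [hs.2])
  have hs0 : 0 < 2 * s := by linarith [hs.1, pi_pos]
  nlinarith [mul_pos hs0 hsin]

theorem characteristicFn_pi_div_four (m : ℝ) : characteristicFn m (π / 4) = m := by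
  simp [characteristicFn, show 2 * (π / 4) = π / 2 by ring]

theorem characteristicFn_pi_div_two (m : ℝ) : characteristicFn m (π / 2) = -(π / 2) := by
  simp [characteristicFn, show 2 * (π / 2) = π by ring]

theorem existsUnique_characteristicFn_eq_zero {m : ℝ} (hm : 0 ≤ m) :
    ∃! s, s ∈ Ico (π / 4) (π / 2) ∧ characteristicFn m s = 0 :=
  existsUnique_mem_Ico_eq_zero_of_strictAntiOn (by linarith [pi_pos])
    (continuous_characteristicFn m).continuousOn (characteristicFn_strictAntiOn (by linarith))
    (by rwa [characteristicFn_pi_div_four]) (by rw [characteristicFn_pi_div_two]; linarith [pi_pos])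

theorem unique_root_E1 (m : ℝ) (hm : 0 ≤ m) :
    ∃! E : ℝ, E ∈ Set.Ico (π^2 / 16) (π^2 / 4) ∧
      m * Real.sin (2 * Real.sqrt E) + Real.sqrt E * Real.cos (2 * Real.sqrt E) = 0 := by
  have hπ4 : (0 : ℝ) < π / 4 := by positivity
  have hπ2 : (0 : ℝ) < π / 2 := by positivity
  have hIco : Ico (π ^ 2 / 16) (π ^ 2 / 4) = Ico ((π / 4) ^ 2) ((π / 2) ^ 2) := by
    congr 1 <;> ring
  obtain ⟨s, ⟨hs, hroot⟩, huniq⟩ := existsUnique_characteristicFn_eq_zero hm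
  have hs0 : 0 ≤ s := hπ4.le.trans hs.1
  refine ⟨s ^ 2, ⟨?_, ?_⟩, fun E ⟨hE, hEroot⟩ => ?_⟩
  · rw [hIco, ← sqrt_mem_Ico_iff hπ4 hπ2, sqrt_sq hs0]
    exact hs
  · rwa [sqrt_sq hs0]
  · rw [hIco, ← sqrt_mem_Ico_iff hπ4 hπ2] at hE
    have hE0 : 0 ≤ E := sqrt_pos.mp (hπ4.trans_le hE.1) |>.le
    rw [← huniq (√E) ⟨hE, hEroot⟩, sq_sqrt hE0]
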